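/- Let m and d be integers with 1 ≤ d ≤ m and set p = d/m. Let S be a uniformly random d-element subset of {1, …, m}, and for 0 ≤ i ≤ m−1 set B_i = |S ∩ {i+1, …, m}| and P_i = B_i/(m−i). Let 0 < α, λ, ξ < 1 with ξ ≥ 1/m and α + ξ < 1. Then with probability at least 1 − 8·ξ^(−1)·exp( −d·λ²·(1−α−ξ)²/3 ), the following holds for all i = 0, 1, …, ⌊α·m⌋: (1−λ)·(1 + ξ/(1−α−ξ))^(−1)·p ≤ P_i ≤ (1+λ)·(1 + ξ/(1−α−ξ))·p. -/

import Mathlib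

/-!
For a fixed set `R` of positions, `|S ∩ R|` is hypergeometric with mean `μ = d|R|/m`, and its
generating function is dominated by the binomial one. Expanding
`(1 + t)^|S ∩ R| = ∑_{A ⊆ S ∩ R} t^|A|` and using `P(A ⊆ S) = C(d, j)/C(m, j)` for `|A| = j`,
together with `C(|R|, j)/C(m, j) ≤ (|R|/m)^j`, gives `E (1 + t)^|S ∩ R| ≤ (1 + t|R|/m)^d` for
`t ≥ 0`; passing to the complement of `R` covers `-1 < t < 0`. The exponential Markov inequality
then bounds the probability that `|S ∩ R| ∉ [(1 - λ)μ, (1 + λ)μ]` by `2 exp(-λ²μ/3)`.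

Apply this to the tails `{g + 1, …, m}` at the grid points `g = kδ`, `δ = ⌊ξm⌋`, up to the first
one beyond `αm`: there are at most `4/ξ` of them, each of mean at least `d(1 - α - ξ)`. Every
`i ≤ αm` lies between two consecutive grid points, `B_i` is monotone in `i`, and moving by at most
`δ ≤ ξm` changes `m - i ≥ (1 - α - ξ)m` by a factor of at most `1 + ξ/(1 - α - ξ)`.
-/

open MeasureTheory ProbabilityTheory Filter Real
open scoped ENNReal NNReal

instance (m : ℕ) : MeasurableSpace (Finset (Fin m)) := ⊤

/-- The uniform measure on the `d`-element subsets of `{1, …, m}` (modelled as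
`d`-element subsets of `Fin m`). -/
noncomputable def uniformSubset (m d : ℕ) : Measure (Finset (Fin m)) :=
  (((Finset.univ.filter fun s : Finset (Fin m) => s.card = d).card : ℝ≥0∞))⁻¹ •
    ∑ s ∈ Finset.univ.filter (fun s : Finset (Fin m) => s.card = d), Measure.dirac s

open Finset

lemma add_sq_div_three_le_one_add_mul_log {x : ℝ} (h0 : 0 ≤ x) (h1 : x ≤ 1) :
    x + x ^ 2 / 3 ≤ (1 + x) * log (1 + x) :=
  calc x + x ^ 2 / 3 ≤ (1 + x) * (2 * x / (x + 2)) := by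
        rw [mul_div_assoc', le_div_iff₀ (by linarith)]; nlinarith
    _ ≤ (1 + x) * log (1 + x) := by gcongr; exact le_log_one_add_of_nonneg h0

lemma sq_div_two_le_add_one_sub_mul_log {x : ℝ} (h0 : 0 ≤ x) (h1 : x < 1) :
    x ^ 2 / 2 ≤ x + (1 - x) * log (1 - x) := by
  have h2x : 2 - x ≠ 0 := by linarith
  have h1x : 1 - x ≠ 0 := by linarith
  have hy1 : x / (2 - x) < 1 := by rw [div_lt_one (by linarith)]; linarith
  have h := log_div_le_sum_range_add (div_nonneg h0 (by linarith)) hy1 1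
  have hlog : (1 + x / (2 - x)) / (1 - x / (2 - x)) = (1 - x)⁻¹ := by
    rw [one_add_div h2x, one_sub_div h2x, div_div_div_cancel_right₀ h2x,
      show 2 - x + x = 2 by ring, show 2 - x - x = 2 * (1 - x) by ring]
    field_simp
  have hsq : 1 - (x / (2 - x)) ^ 2 = 4 * (1 - x) / (2 - x) ^ 2 := by
    rw [div_pow, one_sub_div (pow_ne_zero 2 h2x)]; ring
  have hrhs : x / (2 - x) + (x / (2 - x)) ^ 3 / (4 * (1 - x) / (2 - x) ^ 2)
      = (x - x ^ 2 / 2) / (2 * (1 - x)) := by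
    field_simp; ring
  simp only [sum_range_one, Nat.cast_zero, mul_zero, zero_add, pow_one, div_one] at h
  rw [hlog, log_inv, hsq, hrhs, le_div_iff₀ (by linarith)] at h
  nlinarith

lemma Nat.choose_mul_pow_le_choose_mul_pow {r n : ℕ} (h : r ≤ n) (j : ℕ) :
    r.choose j * n ^ j ≤ n.choose j * r ^ j := by
  induction j with
  | zero => simp
  | succ j ih =>
    refine Nat.le_of_mul_le_mul_right (c := j + 1) ?_ j.succ_pos
    have hstep : (r - j) * n ≤ (n - j) * r := by
      rw [Nat.sub_mul, Nat.sub_mul, mul_comm n r]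
      exact Nat.sub_le_sub_left (Nat.mul_le_mul_left j h) _
    calc r.choose (j + 1) * n ^ (j + 1) * (j + 1)
        = r.choose j * n ^ j * ((r - j) * n) := by
          rw [mul_right_comm, Nat.choose_succ_right_eq]; ring
      _ ≤ n.choose j * r ^ j * ((n - j) * r) := Nat.mul_le_mul ih hstep
      _ = n.choose (j + 1) * r ^ (j + 1) * (j + 1) := by
          rw [mul_right_comm _ _ (j + 1), Nat.choose_succ_right_eq]; ring

lemma choose_div_choose_le_div_pow {r n : ℕ} (h : r ≤ n) (j : ℕ) :
    (r.choose j / n.choose j : ℝ) ≤ ((r : ℝ) / n) ^ j := by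
  rcases lt_or_ge n j with hnj | hjn
  · rw [Nat.choose_eq_zero_of_lt hnj, Nat.cast_zero, div_zero]; positivity
  have hn : 0 < n ^ j := by
    rcases j.eq_zero_or_pos with rfl | hj
    · simp
    · exact pow_pos (by omega) j
  rw [div_pow, div_le_div_iff₀ (by exact_mod_cast Nat.choose_pos hjn) (by exact_mod_cast hn),
    mul_comm ((r : ℝ) ^ j)]
  exact_mod_cast Nat.choose_mul_pow_le_choose_mul_pow h j

lemma sum_range_choose_mul_pow_le (k N : ℕ) {x : ℝ} (hx : 0 ≤ x) :
    ∑ j ∈ range N, (k.choose j : ℝ) * x ^ j ≤ (1 + x) ^ k := by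
  calc ∑ j ∈ range N, (k.choose j : ℝ) * x ^ j
      ≤ ∑ j ∈ range (N + k + 1), (k.choose j : ℝ) * x ^ j :=
        sum_le_sum_of_subset_of_nonneg (range_mono (by omega)) fun _ _ _ => by positivity
    _ = ∑ j ∈ range (k + 1), (k.choose j : ℝ) * x ^ j := by
        refine (sum_subset (range_mono (by omega)) fun j _ hj => ?_).symm
        rw [Nat.choose_eq_zero_of_lt (by simpa using hj), Nat.cast_zero, zero_mul]
    _ = (1 + x) ^ k := by
        rw [add_comm 1 x, add_pow]; exact sum_congr rfl fun j _ => by ring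

lemma card_filter_exists_le_sum {α ι : Type*} [DecidableEq α] (S : Finset α) (I : Finset ι)
    (P : ι → α → Prop) [∀ i, DecidablePred (P i)] [DecidablePred fun a => ∃ i ∈ I, P i a] :
    #{a ∈ S | ∃ i ∈ I, P i a} ≤ ∑ i ∈ I, #{a ∈ S | P i a} :=
  (card_le_card fun a ha => by
    obtain ⟨ha, i, hi, hP⟩ := mem_filter.1 ha
    exact mem_biUnion.2 ⟨i, hi, mem_filter.2 ⟨ha, hP⟩⟩).trans card_biUnion_le

section Hypergeometric

variable {γ : Type*} [Fintype γ]

noncomputable def hypergeometricMean (k : ℕ) (R : Finset γ) : ℝ := k * #R / Fintype.card γ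

lemma hypergeometricMean_nonneg (k : ℕ) (R : Finset γ) : 0 ≤ hypergeometricMean k R := by
  unfold hypergeometricMean; positivity

variable [DecidableEq γ]

lemma card_supersets_mul_choose (k : ℕ) (A : Finset γ) :
    #{s ∈ powersetCard k univ | A ⊆ s} * (Fintype.card γ).choose #A
      = (Fintype.card γ).choose k * k.choose #A := by
  by_cases hA : #A ≤ k
  · rw [card_filter_powersetCard_subset A univ k (subset_univ A) hA, card_univ,
      Nat.choose_mul hA, mul_comm]
  · push Not at hA
    rw [Nat.choose_eq_zero_of_lt hA, mul_zero, filter_false_of_mem, card_empty, zero_mul]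
    intro s hs hAs
    have := card_le_card hAs
    rw [mem_powersetCard_univ] at hs
    omega

lemma sum_add_one_pow_card_inter {S : Type*} [CommSemiring S] (k : ℕ) (R : Finset γ) (t : S) :
    ∑ s ∈ powersetCard k univ, (t + 1) ^ #(s ∩ R)
      = ∑ A ∈ R.powerset, #{s ∈ powersetCard k univ | A ⊆ s} * t ^ #A := by
  have hpow : ∀ s : Finset γ, (s ∩ R).powerset = R.powerset.filter (· ⊆ s) := fun s => by
    ext A; simp only [mem_powerset, mem_filter, subset_inter_iff]; tauto
  calc ∑ s ∈ powersetCard k univ, (t + 1) ^ #(s ∩ R)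
      = ∑ s ∈ powersetCard k univ, ∑ A ∈ R.powerset, if A ⊆ s then t ^ #A else 0 := by
        refine sum_congr rfl fun s _ => ?_
        rw [← sum_pow_mul_eq_add_pow, hpow, sum_filter]
        simp
    _ = ∑ A ∈ R.powerset, #{s ∈ powersetCard k univ | A ⊆ s} * t ^ #A := by
        rw [sum_comm]
        refine sum_congr rfl fun A _ => ?_
        rw [← sum_filter, sum_const, nsmul_eq_mul]

lemma sum_one_add_pow_card_inter_le (k : ℕ) (R : Finset γ) {t : ℝ} (ht : 0 ≤ t) :
    ∑ s ∈ powersetCard k univ, (1 + t) ^ #(s ∩ R)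
      ≤ (Fintype.card γ).choose k * (1 + #R / Fintype.card γ * t) ^ k := by
  set n := Fintype.card γ
  have hsupersets : ∀ A : Finset γ, (#{s ∈ powersetCard k univ | A ⊆ s} : ℝ)
      = n.choose k * k.choose #A / n.choose #A := fun A => by
    rw [eq_div_iff (by exact_mod_cast (Nat.choose_pos (card_le_univ A)).ne')]
    exact_mod_cast card_supersets_mul_choose k A
  rw [add_comm 1 t, sum_add_one_pow_card_inter]
  simp_rw [hsupersets]
  rw [sum_powerset_apply_card (fun j => (n.choose k * k.choose j / n.choose j : ℝ) * t ^ j)]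
  calc ∑ j ∈ range (#R + 1), (#R).choose j • ((n.choose k * k.choose j / n.choose j : ℝ) * t ^ j)
      ≤ ∑ j ∈ range (#R + 1), (n.choose k : ℝ) * (k.choose j * (#R / n * t) ^ j) := by
        gcongr with j
        rw [nsmul_eq_mul, mul_pow]
        calc ((#R).choose j : ℝ) * (n.choose k * k.choose j / n.choose j * t ^ j)
            = n.choose k * (k.choose j * (((#R).choose j / n.choose j) * t ^ j)) := by ring
          _ ≤ n.choose k * (k.choose j * ((#R / n) ^ j * t ^ j)) := by
            gcongr; exact choose_div_choose_le_div_pow (card_le_univ R) j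
    _ ≤ n.choose k * (1 + #R / n * t) ^ k := by
        rw [← mul_sum]; gcongr; exact sum_range_choose_mul_pow_le k _ (by positivity)

lemma sum_pow_card_inter_le [Nonempty γ] (k : ℕ) (R : Finset γ) {z : ℝ} (hz : 0 < z) :
    ∑ s ∈ powersetCard k univ, z ^ #(s ∩ R)
      ≤ (Fintype.card γ).choose k * (1 + #R / Fintype.card γ * (z - 1)) ^ k := by
  rcases le_or_gt 1 z with hz1 | hz1
  · simpa using sum_one_add_pow_card_inter_le k R (sub_nonneg.2 hz1)
  -- For `z < 1`, pass to the complement, whose weight `z⁻¹` exceeds `1`.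
  have hn : (Fintype.card γ : ℝ) ≠ 0 := by exact_mod_cast Fintype.card_ne_zero
  have hsplit : ∀ s ∈ powersetCard k univ, z ^ #(s ∩ R) = z ^ k * (1 + (z⁻¹ - 1)) ^ #(s ∩ Rᶜ) :=
    fun s hs => by
      rw [mem_powersetCard_univ] at hs
      rw [← hs, ← card_inter_add_card_sdiff s R, sdiff_eq_inter_compl, add_sub_cancel, pow_add,
        inv_pow, mul_assoc, mul_inv_cancel₀ (pow_ne_zero _ hz.ne'), mul_one]
  rw [sum_congr rfl hsplit, ← mul_sum]
  calc z ^ k * ∑ s ∈ powersetCard k univ, (1 + (z⁻¹ - 1)) ^ #(s ∩ Rᶜ)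
      ≤ z ^ k * ((Fintype.card γ).choose k * (1 + #Rᶜ / Fintype.card γ * (z⁻¹ - 1)) ^ k) := by
        gcongr
        exact sum_one_add_pow_card_inter_le k Rᶜ
          (by rw [sub_nonneg]; exact one_le_inv_iff₀.2 ⟨hz, hz1.le⟩)
    _ = (Fintype.card γ).choose k * (1 + #R / Fintype.card γ * (z - 1)) ^ k := by
        rw [mul_left_comm, ← mul_pow, card_compl, Nat.cast_sub (card_le_univ R)]
        congr 2
        field_simp
        ring

lemma sum_pow_card_inter_le_exp [Nonempty γ] (k : ℕ) (R : Finset γ) {z : ℝ} (hz : 0 < z) :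
    ∑ s ∈ powersetCard k univ, z ^ #(s ∩ R)
      ≤ (Fintype.card γ).choose k * exp ((z - 1) * hypergeometricMean k R) := by
  have hq : (#R / Fintype.card γ : ℝ) ≤ 1 :=
    div_le_one_of_le₀ (by exact_mod_cast card_le_univ R) (Nat.cast_nonneg _)
  have hq0 : (0 : ℝ) ≤ #R / Fintype.card γ := by positivity
  refine (sum_pow_card_inter_le k R hz).trans (mul_le_mul_of_nonneg_left ?_ (Nat.cast_nonneg _))
  calc (1 + #R / Fintype.card γ * (z - 1)) ^ k
      ≤ exp (#R / Fintype.card γ * (z - 1)) ^ k := by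
        gcongr
        · nlinarith
        · linarith [add_one_le_exp (#R / Fintype.card γ * (z - 1) : ℝ)]
    _ = exp ((z - 1) * hypergeometricMean k R) := by
        rw [← exp_nat_mul, hypergeometricMean]; ring_nf

lemma card_filter_mul_log_le_card_inter_mul_log_le [Nonempty γ] (k : ℕ) (R : Finset γ) {z : ℝ}
    (hz : 0 < z) (θ : ℝ) :
    (#{s ∈ powersetCard k univ | θ * log z ≤ #(s ∩ R) * log z} : ℝ)
      ≤ (Fintype.card γ).choose k * exp ((z - 1) * hypergeometricMean k R - θ * log z) := by
  have hmarkov : (#{s ∈ powersetCard k univ | θ * log z ≤ #(s ∩ R) * log z} : ℝ) * exp (θ * log z)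
      ≤ ∑ s ∈ powersetCard k univ, z ^ #(s ∩ R) :=
    calc _ = ∑ s ∈ powersetCard k univ with θ * log z ≤ #(s ∩ R) * log z, exp (θ * log z) := by
          rw [sum_const, nsmul_eq_mul]
      _ ≤ ∑ s ∈ powersetCard k univ with θ * log z ≤ #(s ∩ R) * log z, z ^ #(s ∩ R) :=
          sum_le_sum fun s hs => by
            rw [← rpow_natCast, rpow_def_of_pos hz, mul_comm (log z)]
            exact exp_le_exp.2 (mem_filter.1 hs).2
      _ ≤ ∑ s ∈ powersetCard k univ, z ^ #(s ∩ R) :=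
          sum_le_sum_of_subset_of_nonneg (filter_subset _ _) fun _ _ _ => by positivity
  rw [exp_sub, ← mul_div_assoc, le_div_iff₀ (exp_pos _)]
  exact hmarkov.trans (sum_pow_card_inter_le_exp k R hz)

lemma card_filter_lt_card_inter_le [Nonempty γ] (k : ℕ) (R : Finset γ) {lam : ℝ}
    (h0 : 0 ≤ lam) (h1 : lam ≤ 1) :
    (#{s ∈ powersetCard k univ | (1 + lam) * hypergeometricMean k R < #(s ∩ R)} : ℝ)
      ≤ (Fintype.card γ).choose k * exp (-(lam ^ 2 * hypergeometricMean k R / 3)) := by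
  set μ := hypergeometricMean k R
  have hμ : 0 ≤ μ := hypergeometricMean_nonneg k R
  have hlog := mul_le_mul_of_nonneg_left (add_sq_div_three_le_one_add_mul_log h0 h1) hμ
  calc _ ≤ (#{s ∈ powersetCard k univ |
          (1 + lam) * μ * log (1 + lam) ≤ #(s ∩ R) * log (1 + lam)} : ℝ) := by
        gcongr with s
        exact fun h => mul_le_mul_of_nonneg_right h.le (log_nonneg (by linarith))
    _ ≤ _ := card_filter_mul_log_le_card_inter_mul_log_le k R (by linarith) _
    _ ≤ _ := by gcongr; nlinarith

lemma card_filter_card_inter_lt_le [Nonempty γ] (k : ℕ) (R : Finset γ) {lam : ℝ}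
    (h0 : 0 ≤ lam) (h1 : lam < 1) :
    (#{s ∈ powersetCard k univ | #(s ∩ R) < (1 - lam) * hypergeometricMean k R} : ℝ)
      ≤ (Fintype.card γ).choose k * exp (-(lam ^ 2 * hypergeometricMean k R / 2)) := by
  set μ := hypergeometricMean k R
  have hμ : 0 ≤ μ := hypergeometricMean_nonneg k R
  have hlog := mul_le_mul_of_nonneg_left (sq_div_two_le_add_one_sub_mul_log h0 h1) hμ
  calc _ ≤ (#{s ∈ powersetCard k univ |
          (1 - lam) * μ * log (1 - lam) ≤ #(s ∩ R) * log (1 - lam)} : ℝ) := by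
        gcongr with s
        exact fun h => mul_le_mul_of_nonpos_right h.le (log_nonpos (by linarith) (by linarith))
    _ ≤ _ := card_filter_mul_log_le_card_inter_mul_log_le k R (by linarith) _
    _ ≤ _ := by gcongr; nlinarith

lemma card_filter_card_inter_notMem_Icc_le [Nonempty γ] (k : ℕ) (R : Finset γ) {lam : ℝ}
    (h0 : 0 ≤ lam) (h1 : lam < 1) :
    (#{s ∈ powersetCard k univ | (#(s ∩ R) : ℝ) ∉
        Set.Icc ((1 - lam) * hypergeometricMean k R) ((1 + lam) * hypergeometricMean k R)} : ℝ)
      ≤ 2 * (Fintype.card γ).choose k * exp (-(lam ^ 2 * hypergeometricMean k R / 3)) := by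
  set μ := hypergeometricMean k R
  have hsplit : {s ∈ powersetCard k (univ : Finset γ) |
        (#(s ∩ R) : ℝ) ∉ Set.Icc ((1 - lam) * μ) ((1 + lam) * μ)}
      ⊆ {s ∈ powersetCard k (univ : Finset γ) | #(s ∩ R) < (1 - lam) * μ}
        ∪ {s ∈ powersetCard k (univ : Finset γ) | (1 + lam) * μ < #(s ∩ R)} := fun s hs => by
    simp only [mem_filter, Set.mem_Icc, not_and_or, not_le, mem_union] at hs ⊢
    tauto
  have hμ : 0 ≤ μ := hypergeometricMean_nonneg k R
  have hexp : exp (-(lam ^ 2 * μ / 2)) ≤ exp (-(lam ^ 2 * μ / 3)) :=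
    exp_le_exp.2 (by nlinarith [mul_nonneg (sq_nonneg lam) hμ])
  calc _ ≤ (#{s ∈ powersetCard k univ | #(s ∩ R) < (1 - lam) * μ} : ℝ)
          + #{s ∈ powersetCard k univ | (1 + lam) * μ < #(s ∩ R)} := by
        exact_mod_cast (card_le_card hsplit).trans (card_union_le _ _)
    _ ≤ _ := by
        linarith [card_filter_card_inter_lt_le k R h0 h1,
          card_filter_lt_card_inter_le k R h0 h1.le,
          mul_le_mul_of_nonneg_left hexp (Nat.cast_nonneg ((Fintype.card γ).choose k))]

lemma card_filter_exists_card_inter_notMem_Icc_le [Nonempty γ] (k : ℕ) {ι : Type*} (I : Finset ι)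
    (R : ι → Finset γ) {lam M : ℝ} (h0 : 0 ≤ lam) (h1 : lam < 1)
    (hM : ∀ i ∈ I, M ≤ hypergeometricMean k (R i)) :
    (#{s ∈ powersetCard k univ | ∃ i ∈ I, (#(s ∩ R i) : ℝ) ∉ Set.Icc
        ((1 - lam) * hypergeometricMean k (R i)) ((1 + lam) * hypergeometricMean k (R i))} : ℝ)
      ≤ #I * (2 * (Fintype.card γ).choose k * exp (-(lam ^ 2 * M / 3))) :=
  calc _ ≤ ∑ i ∈ I, (#{s ∈ powersetCard k univ | (#(s ∩ R i) : ℝ) ∉ Set.Icc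
          ((1 - lam) * hypergeometricMean k (R i)) ((1 + lam) * hypergeometricMean k (R i))} : ℝ) := by
        rw [← Nat.cast_sum]; exact Nat.cast_le.2 (card_filter_exists_le_sum _ _ _)
    _ ≤ ∑ _i ∈ I, 2 * (Fintype.card γ).choose k * exp (-(lam ^ 2 * M / 3)) := by
        gcongr with i hi
        refine (card_filter_card_inter_notMem_Icc_le k (R i) h0 h1).trans ?_
        gcongr
        exact hM i hi
    _ = _ := by rw [sum_const, nsmul_eq_mul]

end Hypergeometric

lemma filter_card_eq_powersetCard (m d : ℕ) :
    univ.filter (fun s : Finset (Fin m) => s.card = d) = powersetCard d univ := by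
  ext s; simp

lemma uniformSubset_apply (m d : ℕ) (E : Set (Finset (Fin m))) [DecidablePred (· ∈ E)] :
    uniformSubset m d E = #{s ∈ powersetCard d univ | s ∈ E} / m.choose d := by
  rw [uniformSubset, Measure.smul_apply, Measure.finsetSum_apply, filter_card_eq_powersetCard,
    card_powersetCard, card_univ, Fintype.card_fin, smul_eq_mul, ENNReal.div_eq_inv_mul]
  simp only [Measure.dirac_apply' _ (MeasurableSpace.measurableSet_top), Set.indicator_apply,
    Pi.one_apply, sum_boole]

lemma isProbabilityMeasure_uniformSubset {m d : ℕ} (hdm : d ≤ m) :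
    IsProbabilityMeasure (uniformSubset m d) := by
  classical
  constructor
  rw [uniformSubset_apply, filter_true_of_mem fun _ _ => Set.mem_univ _, card_powersetCard,
    card_univ, Fintype.card_fin]
  exact ENNReal.div_self (by exact_mod_cast (Nat.choose_pos hdm).ne') (ENNReal.natCast_ne_top _)

lemma one_sub_ofReal_le_uniformSubset {m d : ℕ} (hdm : d ≤ m) (E : Set (Finset (Fin m)))
    [DecidablePred (· ∈ E)] {x : ℝ}
    (h : (#{s ∈ powersetCard d univ | s ∉ E} : ℝ) ≤ x * m.choose d) :
    1 - ENNReal.ofReal x ≤ uniformSubset m d E := by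
  have := isProbabilityMeasure_uniformSubset hdm
  rw [← compl_compl E, prob_compl_eq_one_sub MeasurableSpace.measurableSet_top]
  gcongr
  rw [uniformSubset_apply]
  refine ENNReal.div_le_of_le_mul ?_
  rw [← ENNReal.ofReal_natCast, ← ENNReal.ofReal_natCast, ← ENNReal.ofReal_mul' (Nat.cast_nonneg _)]
  exact ENNReal.ofReal_le_ofReal (by simpa using h)

lemma ratio_bounds_of_between {f : ℕ → ℝ} (hf : Antitone f) {m g i g' : ℕ} {lam p c : ℝ}
    (hlam0 : 0 ≤ lam) (hlam1 : lam ≤ 1) (hp : 0 ≤ p) (hc : 0 ≤ c) (hgi : g ≤ i) (hig : i ≤ g')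
    (him : (i : ℝ) < m) (hgap : (g' - g : ℝ) ≤ c * (m - g'))
    (hlow : (1 - lam) * p * (m - g') ≤ f g') (hup : f g ≤ (1 + lam) * p * (m - g)) :
    (1 - lam) * (1 + c)⁻¹ * p ≤ f i / (m - i) ∧ f i / (m - i) ≤ (1 + lam) * (1 + c) * p := by
  have hmi : 0 < (m : ℝ) - i := by linarith
  have hgi' : (g : ℝ) ≤ i := by exact_mod_cast hgi
  have hig' : (i : ℝ) ≤ g' := by exact_mod_cast hig
  constructor
  · rw [le_div_iff₀ hmi]
    have hshift : (1 + c)⁻¹ * (m - i) ≤ m - g' := by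
      rw [inv_mul_le_iff₀ (by linarith)]; nlinarith
    calc (1 - lam) * (1 + c)⁻¹ * p * (m - i) = (1 - lam) * p * ((1 + c)⁻¹ * (m - i)) := by ring
      _ ≤ (1 - lam) * p * (m - g') := by gcongr
      _ ≤ f i := hlow.trans (hf hig)
  · rw [div_le_iff₀ hmi]
    have hshift : (m : ℝ) - g ≤ (1 + c) * (m - i) := by nlinarith
    calc f i ≤ (1 + lam) * p * (m - g) := (hf hgi).trans hup
      _ ≤ (1 + lam) * p * ((1 + c) * (m - i)) := by gcongr
      _ = (1 + lam) * (1 + c) * p * (m - i) := by ring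

lemma mul_le_add_of_lt_div_add_two {k A δ : ℕ} (hk : k < A / δ + 2) : k * δ ≤ A + δ :=
  calc k * δ ≤ (A / δ + 1) * δ := Nat.mul_le_mul_right δ (by omega)
    _ ≤ A + δ := by rw [add_one_mul]; exact Nat.add_le_add_right (Nat.div_mul_le_self A δ) δ

lemma natCast_div_floor_add_two_le {m A : ℕ} {α ξ : ℝ} (hξm : 1 ≤ ξ * m) (hA : (A : ℝ) ≤ α * m)
    (hαξ : α + ξ ≤ 2) : ((A / ⌊ξ * m⌋₊ + 2 : ℕ) : ℝ) ≤ 4 / ξ := by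
  have hm : (0 : ℝ) ≤ m := Nat.cast_nonneg m
  have hξ : 0 < ξ := by by_contra h; push Not at h; nlinarith
  have hδ1 : (1 : ℝ) ≤ ⌊ξ * m⌋₊ := by exact_mod_cast Nat.floor_pos.2 hξm
  -- `⌊x⌋₊ ≥ x / 2` once `x ≥ 1`
  have hδ2 : ξ * m / 2 ≤ ⌊ξ * m⌋₊ := by linarith [Nat.lt_floor_add_one (ξ * m)]
  calc ((A / ⌊ξ * m⌋₊ + 2 : ℕ) : ℝ) ≤ A / ⌊ξ * m⌋₊ + 2 := by
        push_cast; gcongr; exact Nat.cast_div_le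
    _ ≤ α * m / (ξ * m / 2) + 2 := by gcongr; linarith [Nat.cast_nonneg (α := ℝ) A]
    _ = 2 * α / ξ + 2 := by
        have : (m : ℝ) ≠ 0 := by rintro h; rw [h, mul_zero] at hξm; linarith
        field_simp
    _ ≤ 4 / ξ := by rw [div_add' _ _ _ hξ.ne', div_le_div_iff_of_pos_right hξ]; linarith

lemma ratio_bounds_of_grid {f : ℕ → ℝ} (hf : Antitone f) {m d δ A : ℕ} {α ξ lam : ℝ}
    (hlam0 : 0 ≤ lam) (hlam1 : lam ≤ 1) (hξ : 0 ≤ ξ) (hαξ : α + ξ < 1) (hδ : 0 < δ)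
    (hδξ : (δ : ℝ) ≤ ξ * m) (hA : (A : ℝ) ≤ α * m)
    (hgrid : ∀ k ∈ range (A / δ + 2), f (k * δ) ∈
      Set.Icc ((1 - lam) * (d * (m - k * δ : ℕ) / m)) ((1 + lam) * (d * (m - k * δ : ℕ) / m)))
    {i : ℕ} (hi : i ≤ A) :
    (1 - lam) * (1 + ξ / (1 - α - ξ))⁻¹ * (d / m) ≤ f i / (m - i) ∧
      f i / (m - i) ≤ (1 + lam) * (1 + ξ / (1 - α - ξ)) * (d / m) := by
  have hm : (0 : ℝ) < m := by
    have : (0 : ℝ) < δ := by exact_mod_cast hδ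
    by_contra h; push Not at h; nlinarith
  have hαξ' : 0 < 1 - α - ξ := by linarith
  have hk : i / δ + 1 ∈ range (A / δ + 2) := by
    have := Nat.div_le_div_right (c := δ) hi; rw [mem_range]; omega
  have hk' : i / δ ∈ range (A / δ + 2) := by
    have := Nat.div_le_div_right (c := δ) hi; rw [mem_range]; omega
  have hnext := mul_le_add_of_lt_div_add_two (mem_range.1 hk)
  have hnextR : ((i / δ + 1) * δ : ℕ) ≤ (α + ξ) * m := by
    have : (((i / δ + 1) * δ : ℕ) : ℝ) ≤ A + δ := by exact_mod_cast hnext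
    linarith
  have hcast : ∀ k ≤ i / δ + 1, (((m - k * δ : ℕ) : ℝ)) = m - (k * δ : ℕ) := fun k hk => by
    have hle : ((k * δ : ℕ) : ℝ) ≤ ((i / δ + 1) * δ : ℕ) := by
      exact_mod_cast Nat.mul_le_mul_right δ hk
    exact Nat.cast_sub (by exact_mod_cast (show ((k * δ : ℕ) : ℝ) ≤ m by nlinarith))
  -- `i` lies between the consecutive grid points `(i / δ) δ` and `(i / δ + 1) δ`.
  refine ratio_bounds_of_between hf (g := i / δ * δ) (g' := (i / δ + 1) * δ) hlam0 hlam1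
    (by positivity) (div_nonneg hξ hαξ'.le) (Nat.div_mul_le_self i δ)
    (by rw [add_one_mul]; exact (Nat.lt_div_mul_add hδ).le) ?_ ?_ ?_ ?_
  · have : (i : ℝ) ≤ A := by exact_mod_cast hi
    nlinarith
  · have hgap : (((i / δ + 1) * δ : ℕ) : ℝ) - (i / δ * δ : ℕ) = δ := by push_cast; ring
    rw [hgap]
    calc (δ : ℝ) ≤ ξ / (1 - α - ξ) * ((1 - α - ξ) * m) := by field_simp; exact hδξ
      _ ≤ ξ / (1 - α - ξ) * (m - ((i / δ + 1) * δ : ℕ)) := by gcongr; linarith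
  · have := (hgrid _ hk).1
    rw [hcast _ le_rfl] at this
    exact (le_of_eq (by ring)).trans this
  · have := (hgrid _ hk').2
    rw [hcast _ (Nat.le_succ _)] at this
    exact this.trans (le_of_eq (by ring))

/-- The positions `g, …, m - 1` of `Fin m`, i.e. the paper's `{g + 1, …, m}`. -/
def tailFinset (m g : ℕ) : Finset (Fin m) := {j | g ≤ (j : ℕ)}

lemma card_tailFinset (m g : ℕ) : #(tailFinset m g) = m - g := by
  rw [tailFinset, ← card_map Fin.valEmbedding, ← Nat.card_Ico g m]
  congr 1; ext x
  simp only [Finset.mem_map, mem_filter, mem_univ, true_and, Fin.valEmbedding_apply, mem_Ico]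
  exact ⟨fun ⟨y, hy, hyx⟩ => hyx ▸ ⟨hy, y.2⟩, fun h => ⟨⟨x, h.2⟩, h.1, rfl⟩⟩

lemma inter_tailFinset {m : ℕ} (s : Finset (Fin m)) (g : ℕ) :
    s ∩ tailFinset m g = s.filter fun j : Fin m => g ≤ (j : ℕ) := by
  ext; simp [tailFinset]

lemma antitone_card_inter_tailFinset {m : ℕ} (s : Finset (Fin m)) :
    Antitone fun g => (#(s ∩ tailFinset m g) : ℝ) := fun _ _ hgg' => by
  simp only [inter_tailFinset]
  exact_mod_cast card_le_card (monotone_filter_right _ fun _ _ hj => hgg'.trans hj)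

lemma hypergeometricMean_tailFinset (d m g : ℕ) :
    hypergeometricMean d (tailFinset m g) = d * (m - g : ℕ) / m := by
  rw [hypergeometricMean, card_tailFinset, Fintype.card_fin]

lemma mul_sq_le_hypergeometricMean_tailFinset {m d δ A k : ℕ} {α ξ : ℝ} (hm : 0 < m)
    (hαξ : α + ξ < 1) (hδξ : (δ : ℝ) ≤ ξ * m) (hA : (A : ℝ) ≤ α * m)
    (hk : k ∈ range (A / δ + 2)) :
    d * (1 - α - ξ) ^ 2 ≤ hypergeometricMean d (tailFinset m (k * δ)) := by
  have hmR : (0 : ℝ) < m := by exact_mod_cast hm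
  have hkδ : ((k * δ : ℕ) : ℝ) ≤ (α + ξ) * m := by
    have : ((k * δ : ℕ) : ℝ) ≤ A + δ := by
      exact_mod_cast mul_le_add_of_lt_div_add_two (mem_range.1 hk)
    linarith
  have hαξ0 : 0 ≤ α + ξ := by nlinarith [Nat.cast_nonneg (α := ℝ) (k * δ)]
  rw [hypergeometricMean_tailFinset,
    Nat.cast_sub (by exact_mod_cast (show ((k * δ : ℕ) : ℝ) ≤ m by nlinarith)),
    mul_div_assoc, sub_div, div_self hmR.ne']
  gcongr
  calc (1 - α - ξ) ^ 2 ≤ 1 - α - ξ := by nlinarith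
    _ ≤ 1 - (k * δ : ℕ) / m := by linarith [(div_le_iff₀ hmR).2 hkδ]

theorem hypergeometric_history_concentration_general (m d : ℕ) (hd1 : 1 ≤ d) (hdm : d ≤ m)
    (α lam ξ : ℝ) (hα0 : 0 < α) (hlam0 : 0 < lam) (hlam1 : lam < 1)
    (hξ0 : 0 < ξ) (hξm : 1 / (m : ℝ) ≤ ξ) (hαξ : α + ξ < 1) :
    1 - ENNReal.ofReal (8 * ξ⁻¹ * Real.exp (-(d : ℝ) * lam ^ 2 * (1 - α - ξ) ^ 2 / 3))
      ≤ uniformSubset m d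
          {s | ∀ i : ℕ, i ≤ ⌊α * m⌋₊ →
            (1 - lam) * (1 + ξ / (1 - α - ξ))⁻¹ * ((d : ℝ) / m) ≤
                ((s.filter fun j : Fin m => i ≤ (j : ℕ)).card : ℝ) / ((m : ℝ) - i) ∧
              ((s.filter fun j : Fin m => i ≤ (j : ℕ)).card : ℝ) / ((m : ℝ) - i) ≤
                (1 + lam) * (1 + ξ / (1 - α - ξ)) * ((d : ℝ) / m)} := by
  classical
  have hm : 0 < m := by omega
  have : Nonempty (Fin m) := ⟨⟨0, hm⟩⟩
  have hξm1 : 1 ≤ ξ * m := by rwa [div_le_iff₀ (by exact_mod_cast hm)] at hξm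
  set δ := ⌊ξ * m⌋₊
  set A := ⌊α * m⌋₊
  have hδ : 0 < δ := Nat.floor_pos.2 hξm1
  have hδξ : (δ : ℝ) ≤ ξ * m := Nat.floor_le (by positivity)
  have hA : (A : ℝ) ≤ α * m := Nat.floor_le (by positivity)
  refine one_sub_ofReal_le_uniformSubset hdm _ ?_
  calc _ ≤ (#{s ∈ powersetCard d univ | ∃ k ∈ range (A / δ + 2),
          (#(s ∩ tailFinset m (k * δ)) : ℝ) ∉ Set.Icc
            ((1 - lam) * hypergeometricMean d (tailFinset m (k * δ)))
            ((1 + lam) * hypergeometricMean d (tailFinset m (k * δ)))} : ℝ) := by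
        gcongr with s
        refine not_imp_comm.1 fun hgrid i hi => ?_
        push Not at hgrid
        simpa only [inter_tailFinset] using ratio_bounds_of_grid
          (antitone_card_inter_tailFinset s) hlam0.le hlam1.le hξ0.le hαξ hδ hδξ hA
          (fun k hk => by simpa only [hypergeometricMean_tailFinset] using hgrid k hk) hi
    _ ≤ #(range (A / δ + 2)) * (2 * (Fintype.card (Fin m)).choose d
          * exp (-(lam ^ 2 * (d * (1 - α - ξ) ^ 2) / 3))) :=
        card_filter_exists_card_inter_notMem_Icc_le d _ _ hlam0.le hlam1 fun _ hk =>
          mul_sq_le_hypergeometricMean_tailFinset hm hαξ hδξ hA hk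
    _ ≤ 4 / ξ * (2 * m.choose d * exp (-(lam ^ 2 * (d * (1 - α - ξ) ^ 2) / 3))) := by
        rw [card_range, Fintype.card_fin]
        gcongr
        exact natCast_div_floor_add_two_le hξm1 hA (by linarith)
    _ = _ := by ring_nf

/-- Proposition 11 of "The Phase Transition of Discrepancy in Random Hypergraphs":
for a uniformly random `d`-subset `S` of `{1, …, m}`, `B_i = |S ∩ {i+1, …, m}|` and
`P_i = B_i/(m−i)`, with probability at least `1 − 8ξ⁻¹ exp(−dλ²(1−α−ξ)²/3)`, for
all `i ≤ ⌊αm⌋` we have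
`(1−λ)(1 + ξ/(1−α−ξ))⁻¹ p ≤ P_i ≤ (1+λ)(1 + ξ/(1−α−ξ)) p`, where `p = d/m`. -/
theorem hypergeometric_history_concentration (m d : ℕ) (hd1 : 1 ≤ d) (hdm : d ≤ m)
    (α lam ξ : ℝ) (hα0 : 0 < α) (hα1 : α < 1) (hlam0 : 0 < lam) (hlam1 : lam < 1)
    (hξ0 : 0 < ξ) (hξ1 : ξ < 1) (hξm : 1 / (m : ℝ) ≤ ξ) (hαξ : α + ξ < 1) :
    1 - ENNReal.ofReal (8 * ξ⁻¹ * Real.exp (-(d : ℝ) * lam ^ 2 * (1 - α - ξ) ^ 2 / 3))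
      ≤ uniformSubset m d
          {s | ∀ i : ℕ, i ≤ ⌊α * m⌋₊ →
            (1 - lam) * (1 + ξ / (1 - α - ξ))⁻¹ * ((d : ℝ) / m) ≤
                ((s.filter fun j : Fin m => i ≤ (j : ℕ)).card : ℝ) / ((m : ℝ) - i) ∧
              ((s.filter fun j : Fin m => i ≤ (j : ℕ)).card : ℝ) / ((m : ℝ) - i) ≤
                (1 + lam) * (1 + ξ / (1 - α - ξ)) * ((d : ℝ) / m)} :=
  hypergeometric_history_concentration_general m d hd1 hdm α lam ξ hα0 hlam0 hlam1 hξ0 hξm hαξ
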